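/- For all n ≥ 0, the number of Dumont permutations of the fourth kind of length 2n avoiding the pattern 1243 equals n² - n + 1, and hence equals the number of Dumont-4 permutations of length 2n avoiding 1324. -/
import Mathlib

/-- `π` contains the pattern `q` (a length-`k` sequence of distinct values given
as a function `Fin k → Fin k`) if some subsequence of `π` is order-isomorphic to `q`. -/
def PatternContains {n k : ℕ} (π : Equiv.Perm (Fin n)) (q : Fin k → Fin k) : Prop :=
  ∃ f : Fin k → Fin n, StrictMono f ∧ ∀ a b : Fin k, q a < q b ↔ π (f a) < π (f b)

/-- `π` avoids the pattern `q`. -/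
def Avoids {n k : ℕ} (π : Equiv.Perm (Fin n)) (q : Fin k → Fin k) : Prop :=
  ¬ PatternContains π q

/-- A Dumont permutation of the fourth kind of size `2n` (0-based indexing:
position `i` and value `π i` correspond to 1-based position `i+1` and value `π i + 1`):
every deficiency occurs at an even (1-based) position and has an even (1-based) value. -/
def IsDumont4 (n : ℕ) (π : Equiv.Perm (Fin (2 * n))) : Prop :=
  ∀ i : Fin (2 * n), (π i : ℕ) < (i : ℕ) → Even ((i : ℕ) + 1) ∧ Even ((π i : ℕ) + 1)

def p1234 : Fin 4 → Fin 4 := ![0, 1, 2, 3]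
def p1342 : Fin 4 → Fin 4 := ![0, 2, 3, 1]
def p1432 : Fin 4 → Fin 4 := ![0, 3, 2, 1]
def p1324 : Fin 4 → Fin 4 := ![0, 2, 1, 3]
def p1243 : Fin 4 → Fin 4 := ![0, 1, 3, 2]
def p1423 : Fin 4 → Fin 4 := ![0, 3, 1, 2]
def p231 : Fin 3 → Fin 3 := ![1, 2, 0]
def p321 : Fin 3 → Fin 3 := ![2, 1, 0]
def p213 : Fin 3 → Fin 3 := ![1, 0, 2]
def p312 : Fin 3 → Fin 3 := ![2, 0, 1]



def cfun (t a b : ℕ) (j : ℕ) : ℕ :=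
  if j = t then a else if a ≤ j ∧ j < b then j + 1 else if j = b then t else j

lemma cfun_lt {t a b N : ℕ} (ht : t < N) (hb : b < N) (hab : a ≤ b) {j : ℕ} (hj : j < N) :
    cfun t a b j < N := by
  unfold cfun; split_ifs <;> omega

lemma cfun_inj {t a b : ℕ} (hta : t < a ∨ b < t) (hab : a ≤ b) :
    Function.Injective (cfun t a b) := by
  intro x y h
  unfold cfun at h
  split_ifs at h <;> omega

noncomputable def cyc (N t a b : ℕ) : Equiv.Perm (Fin N) :=
  if h : t < N ∧ a ≤ b ∧ b < N ∧ (t < a ∨ b < t) then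
    Equiv.ofBijective (fun j => ⟨cfun t a b j, cfun_lt h.1 h.2.2.1 h.2.1 j.2⟩)
      (Finite.injective_iff_bijective.mp (fun x y hxy => by
        apply Fin.ext
        exact cfun_inj h.2.2.2 h.2.1 (congrArg Fin.val hxy)))
  else 1

lemma cyc_apply {N t a b : ℕ} (ht : t < N) (hb : b < N) (hab : a ≤ b) (hta : t < a ∨ b < t)
    (j : Fin N) : ((cyc N t a b) j : ℕ) = cfun t a b (j : ℕ) := by
  rw [cyc, dif_pos ⟨ht, hab, hb, hta⟩]
  rfl

lemma dumont_mod {n : ℕ} {π : Equiv.Perm (Fin (2 * n))} (h : IsDumont4 n π) (i : Fin (2 * n))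
    (hlt : (π i : ℕ) < (i : ℕ)) : (i : ℕ) % 2 = 1 ∧ (π i : ℕ) % 2 = 1 := by
  have := h i hlt
  simp only [Nat.even_add_one, Nat.not_even_iff] at this
  exact this

lemma perm_zero {n : ℕ} {π : Equiv.Perm (Fin (2 * n))} (h : IsDumont4 n π ) (h0 : 0 < 2 * n) :
    (π ⟨0, h0⟩ : ℕ) = 0 := by
  by_contra hne
  set q := π.symm ⟨0, h0⟩ with hq
  have hπq : π q = ⟨0, h0⟩ := π.apply_symm_apply _
  have hπq' : (π q : ℕ) = 0 := by rw [hπq]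
  have hqne : (q : ℕ) ≠ 0 := by
    intro h'
    have : q = ⟨0, h0⟩ := Fin.ext h'
    rw [this] at hπq'
    exact hne hπq'
  have hlt : (π q : ℕ) < (q : ℕ) := by omega
  have := (dumont_mod h q hlt).2
  omega

-- evaluation lemmas
lemma v4_0 {α : Type*} (x y z w : α) (h : 0 < 4) : ![x, y, z, w] ⟨0, h⟩ = x := rfl
lemma v4_1 {α : Type*} (x y z w : α) (h : 1 < 4) : ![x, y, z, w] ⟨1, h⟩ = y := rfl
lemma v4_2 {α : Type*} (x y z w : α) (h : 2 < 4) : ![x, y, z, w] ⟨2, h⟩ = z := rfl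
lemma v4_3 {α : Type*} (x y z w : α) (h : 3 < 4) : ![x, y, z, w] ⟨3, h⟩ = w := rfl

lemma strictMono4 {N : ℕ} {x y z w : Fin N} (h1 : x < y) (h2 : y < z) (h3 : z < w) :
    StrictMono ![x, y, z, w] := by
  intro a b hab
  obtain ⟨av, ha⟩ := a
  obtain ⟨bv, hb⟩ := b
  interval_cases av <;> interval_cases bv <;>
    simp only [v4_0, v4_1, v4_2, v4_3] <;>
    first
      | exact absurd (Fin.mk_lt_mk.mp hab) (by omega)
      | exact h1
      | exact h2
      | exact h3
      | exact h1.trans h2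
      | exact h2.trans h3
      | exact (h1.trans h2).trans h3

lemma contains1243_iff {N : ℕ} (π : Equiv.Perm (Fin N)) (hN : 0 < N) (h0 : (π ⟨0, hN⟩ : ℕ) = 0) :
    PatternContains π p1243 ↔
      ∃ j k l : Fin N, 0 < (j : ℕ) ∧ (j : ℕ) < k ∧ (k : ℕ) < l ∧
        (π j : ℕ) < (π l : ℕ) ∧ (π l : ℕ) < (π k : ℕ) := by
  constructor
  · rintro ⟨f, hf, hiff⟩
    refine ⟨f 1, f 2, f 3, ?_, ?_, ?_, ?_, ?_⟩
    · have : (f 0 : ℕ) < (f 1 : ℕ) := hf (by decide)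
      omega
    · exact hf (show (1:Fin 4) < 2 by decide)
    · exact hf (show (2:Fin 4) < 3 by decide)
    · exact (hiff 1 3).mp (by decide)
    · exact (hiff 3 2).mp (by decide)
  · rintro ⟨j, k, l, hj, hjk, hkl, h1, h2⟩
    have hπj : 0 < (π j : ℕ) := by
      by_contra hc
      have heq : π j = π ⟨0, hN⟩ := Fin.ext (by omega)
      have heq2 := π.injective heq
      have : (j : ℕ) = 0 := by rw [heq2]
      omega
    refine ⟨![⟨0, hN⟩, j, k, l], strictMono4 hj hjk hkl, ?_⟩
    intro a b
    obtain ⟨av, ha⟩ := a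
    obtain ⟨bv, hb⟩ := b
    interval_cases av <;> interval_cases bv <;>
      simp only [p1243, v4_0, v4_1, v4_2, v4_3, Fin.lt_def, Fin.val_zero, h0] <;>
      simp only [show ((0:Fin 4):ℕ) = 0 from rfl, show ((1:Fin 4):ℕ) = 1 from rfl,
        show ((2:Fin 4):ℕ) = 2 from rfl, show ((3:Fin 4):ℕ) = 3 from rfl] <;>
      omega

lemma contains1324_iff {N : ℕ} (π : Equiv.Perm (Fin N)) (hN : 0 < N) (h0 : (π ⟨0, hN⟩ : ℕ) = 0) :
    PatternContains π p1324 ↔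
      ∃ j k l : Fin N, 0 < (j : ℕ) ∧ (j : ℕ) < k ∧ (k : ℕ) < l ∧
        (π k : ℕ) < (π j : ℕ) ∧ (π j : ℕ) < (π l : ℕ) := by
  constructor
  · rintro ⟨f, hf, hiff⟩
    refine ⟨f 1, f 2, f 3, ?_, ?_, ?_, ?_, ?_⟩
    · have : (f 0 : ℕ) < (f 1 : ℕ) := hf (by decide)
      omega
    · exact hf (show (1:Fin 4) < 2 by decide)
    · exact hf (show (2:Fin 4) < 3 by decide)
    · exact (hiff 2 1).mp (by decide)
    · exact (hiff 1 3).mp (by decide)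
  · rintro ⟨j, k, l, hj, hjk, hkl, h1, h2⟩
    have hπk : 0 < (π k : ℕ) := by
      by_contra hc
      have heq : π k = π ⟨0, hN⟩ := Fin.ext (by omega)
      have heq2 := π.injective heq
      have : (k : ℕ) = 0 := by rw [heq2]
      omega
    refine ⟨![⟨0, hN⟩, j, k, l], strictMono4 hj hjk hkl, ?_⟩
    intro a b
    obtain ⟨av, ha⟩ := a
    obtain ⟨bv, hb⟩ := b
    interval_cases av <;> interval_cases bv <;>
      simp only [p1324, v4_0, v4_1, v4_2, v4_3, Fin.lt_def, Fin.val_zero, h0] <;>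
      simp only [show ((0:Fin 4):ℕ) = 0 from rfl, show ((1:Fin 4):ℕ) = 1 from rfl,
        show ((2:Fin 4):ℕ) = 2 from rfl, show ((3:Fin 4):ℕ) = 3 from rfl] <;>
      omega




lemma one_dumont (n : ℕ) : IsDumont4 n (1 : Equiv.Perm (Fin (2*n))) := by
  intro i hi
  simp at hi

lemma one_avoids1243 (n : ℕ) : Avoids (1 : Equiv.Perm (Fin (2*n))) p1243 := by
  intro hpc
  rcases Nat.eq_zero_or_pos (2*n) with h | h
  · obtain ⟨f, _, _⟩ := hpc
    exact absurd (f 0).2 (by omega)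
  · rw [contains1243_iff _ h (by simp)] at hpc
    obtain ⟨j, k, l, hj, hjk, hkl, h1, h2⟩ := hpc
    simp at h1 h2
    omega

lemma one_avoids1324 (n : ℕ) : Avoids (1 : Equiv.Perm (Fin (2*n))) p1324 := by
  intro hpc
  rcases Nat.eq_zero_or_pos (2*n) with h | h
  · obtain ⟨f, _, _⟩ := hpc
    exact absurd (f 0).2 (by omega)
  · rw [contains1324_iff _ h (by simp)] at hpc
    obtain ⟨j, k, l, hj, hjk, hkl, h1, h2⟩ := hpc
    simp at h1 h2
    omega

section fam1
variable {n a b : ℕ} (ha : 2 ≤ a) (hab : a ≤ b) (hb : b < 2*n) (hodd : b % 2 = 1)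

include ha hab hb in
lemma cyc1_apply (j : Fin (2*n)) : ((cyc (2*n) 1 a b) j : ℕ) = cfun 1 a b (j : ℕ) :=
  cyc_apply (by omega) hb hab (by omega) j

include ha hab hb hodd in
lemma cyc1_dumont : IsDumont4 n (cyc (2*n) 1 a b) := by
  intro i hi
  rw [cyc1_apply ha hab hb] at hi ⊢
  simp only [Nat.even_add_one, Nat.not_even_iff]
  unfold cfun at hi ⊢
  split_ifs at hi ⊢ <;> omega

include ha hab hb in
lemma cyc1_zero (h0 : 0 < 2*n) : ((cyc (2*n) 1 a b) ⟨0, h0⟩ : ℕ) = 0 := by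
  rw [cyc1_apply ha hab hb]
  show cfun 1 a b 0 = 0
  unfold cfun
  split_ifs <;> (try contradiction) <;> omega

include ha hab hb in
lemma cyc1_avoids : Avoids (cyc (2*n) 1 a b) p1243 := by
  intro hpc
  have h0 : 0 < 2*n := by omega
  rw [contains1243_iff _ h0 (cyc1_zero ha hab hb h0)] at hpc
  obtain ⟨j, k, l, hj, hjk, hkl, h1, h2⟩ := hpc
  rw [cyc1_apply ha hab hb, cyc1_apply ha hab hb] at h1 h2
  have hlv : (l : ℕ) < 2*n := l.2
  unfold cfun at h1 h2
  split_ifs at h1 h2 <;> omega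
end fam1

section fam2
variable {n s c : ℕ} (hs : s % 2 = 1) (hsc : s ≤ c) (hc : c + 1 < 2*n)

include hs hsc hc in
lemma cyc2_apply (j : Fin (2*n)) : ((cyc (2*n) (2*n-1) s c) j : ℕ) = cfun (2*n-1) s c (j : ℕ) :=
  cyc_apply (by omega) (by omega) hsc (by omega) j

include hs hsc hc in
lemma cyc2_dumont : IsDumont4 n (cyc (2*n) (2*n-1) s c) := by
  intro i hi
  rw [cyc2_apply hs hsc hc] at hi ⊢
  simp only [Nat.even_add_one, Nat.not_even_iff]
  unfold cfun at hi ⊢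
  split_ifs at hi ⊢ <;> omega

include hs hsc hc in
lemma cyc2_zero (h0 : 0 < 2*n) : ((cyc (2*n) (2*n-1) s c) ⟨0, h0⟩ : ℕ) = 0 := by
  rw [cyc2_apply hs hsc hc]
  show cfun (2*n-1) s c 0 = 0
  unfold cfun
  split_ifs <;> (try contradiction) <;> omega

include hs hsc hc in
lemma cyc2_avoids : Avoids (cyc (2*n) (2*n-1) s c) p1324 := by
  intro hpc
  have h0 : 0 < 2*n := by omega
  rw [contains1324_iff _ h0 (cyc2_zero hs hsc hc h0)] at hpc
  obtain ⟨j, k, l, hj, hjk, hkl, h1, h2⟩ := hpc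
  rw [cyc2_apply hs hsc hc, cyc2_apply hs hsc hc] at h1 h2
  have hlv : (l : ℕ) < 2*n := l.2
  unfold cfun at h1 h2
  split_ifs at h1 h2 <;> omega
end fam2



theorem classify1243 {n : ℕ} (π : Equiv.Perm (Fin (2*n))) (hd : IsDumont4 n π)
    (hav : Avoids π p1243) :
    π = 1 ∨ ∃ a b : ℕ, 2 ≤ a ∧ a ≤ b ∧ b < 2*n ∧ b % 2 = 1 ∧ π = cyc (2*n) 1 a b := by
  have mkv : ∀ (v : ℕ) (h : v < 2*n), ((⟨v, h⟩ : Fin (2*n)) : ℕ) = v := fun _ _ => rfl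
  rcases Nat.eq_zero_or_pos n with hn0 | hn
  · left
    apply Equiv.ext
    intro i
    exact absurd i.2 (by omega)
  have hN : 0 < 2*n := by omega
  have h1N : 1 < 2*n := by omega
  have h0 : (π ⟨0, hN⟩ : ℕ) = 0 := perm_zero hd hN
  have inj : ∀ x y : Fin (2*n), (π x : ℕ) = (π y : ℕ) → (x : ℕ) = (y : ℕ) :=
    fun x y h => congrArg Fin.val (π.injective (Fin.ext h))
  have no132 : ∀ j k l : Fin (2*n), 0 < (j : ℕ) → (j : ℕ) < k → (k : ℕ) < l →
      (π j : ℕ) < (π l : ℕ) → (π l : ℕ) < (π k : ℕ) → False := by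
    intro j k l hj hjk hkl hA hB
    exact hav ((contains1243_iff π hN h0).mpr ⟨j, k, l, hj, hjk, hkl, hA, hB⟩)
  have symmv : ∀ (v : ℕ) (hv : v < 2*n), (π (π.symm ⟨v, hv⟩) : ℕ) = v := by
    intro v hv
    rw [π.apply_symm_apply]
  set A := (π ⟨1, h1N⟩ : ℕ) with hA
  by_cases hA1 : A = 1
  · -- identity case
    left
    have fix : ∀ p : ℕ, ∀ hp : p < 2*n, (π ⟨p, hp⟩ : ℕ) = p := by
      intro p
      induction p using Nat.strong_induction_on with
      | _ p IH =>
        intro hp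
        rcases Nat.lt_or_ge p 2 with hp2 | hp2
        · rcases (by omega : p = 0 ∨ p = 1) with h | h
          · subst h; exact h0
          · subst h; exact hA1
        · -- p ≥ 2
          have hge : p ≤ (π ⟨p, hp⟩ : ℕ) := by
            by_contra hlt
            push_neg at hlt
            set w := (π ⟨p, hp⟩ : ℕ) with hw
            have hwN : w < 2*n := (π ⟨p, hp⟩).2
            have hv : (π ⟨w, hwN⟩ : ℕ) = w := IH w hlt hwN
            have := inj ⟨w, hwN⟩ ⟨p, hp⟩ (by omega)
            simp only [mkv] at this
            omega
          rcases eq_or_lt_of_le hge with heq | hgt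
          · exact heq.symm
          · exfalso
            set q := π.symm ⟨p, hp⟩ with hq
            have hqv : (π q : ℕ) = p := symmv p hp
            have hqgt : p < (q : ℕ) := by
              rcases Nat.lt_trichotomy (q : ℕ) p with h | h | h
              · exfalso
                have he : (⟨(q:ℕ), q.2⟩ : Fin (2*n)) = q := rfl
                have := IH (q:ℕ) h q.2
                rw [he] at this
                omega
              · exfalso
                have : q = ⟨p, hp⟩ := Fin.ext h
                rw [this] at hqv
                omega
              · exact h
            refine no132 ⟨1, h1N⟩ ⟨p, hp⟩ q ?_ ?_ ?_ ?_ ?_ <;>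
              (try simp only [mkv]) <;> omega
    apply Equiv.ext
    intro i
    apply Fin.ext
    have := fix i.1 i.2
    rw [Equiv.Perm.one_apply]
    exact this
  · -- non-identity case
    right
    have hA0 : A ≠ 0 := by
      intro hc
      have := inj ⟨1, h1N⟩ ⟨0, hN⟩ (by omega)
      simp only [mkv] at this
      omega
    have hA2 : 2 ≤ A := by omega
    have hAN : A < 2*n := (π ⟨1, h1N⟩).2
    set m := π.symm ⟨1, h1N⟩ with hm
    set b := (m : ℕ) with hb
    have hbN : b < 2*n := m.2
    have hme : (⟨b, hbN⟩ : Fin (2*n)) = m := rfl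
    have hmeq : (π ⟨b, hbN⟩ : ℕ) = 1 := by rw [hme]; exact symmv 1 h1N
    have hb0 : b ≠ 0 := by
      intro hc
      have : (⟨0, hN⟩ : Fin (2*n)) = ⟨b, hbN⟩ := Fin.ext (by simp only [mkv]; omega)
      rw [this] at h0
      omega
    have hb1 : b ≠ 1 := by
      intro hc
      have : (⟨1, h1N⟩ : Fin (2*n)) = ⟨b, hbN⟩ := Fin.ext (by simp only [mkv]; omega)
      rw [this] at hA
      omega
    have hbodd : b % 2 = 1 := by
      have := dumont_mod hd ⟨b, hbN⟩ (by rw [hmeq, mkv]; omega)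
      rw [mkv] at this
      exact this.1
    have hb3 : 3 ≤ b := by omega
    -- C1
    have C1 : ∀ p : ℕ, 2 ≤ p → p < b → ∀ hp : p < 2*n,
        (π ⟨p, hp⟩ : ℕ) = if p < A then p else p + 1 := by
      intro p
      induction p using Nat.strong_induction_on with
      | _ p IH =>
        intro hp2 hpb hp
        have hne0 : (π ⟨p, hp⟩ : ℕ) ≠ 0 := by
          intro hc
          have := inj ⟨p, hp⟩ ⟨0, hN⟩ (by omega)
          simp only [mkv] at this
          omega
        have hne1 : (π ⟨p, hp⟩ : ℕ) ≠ 1 := by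
          intro hc
          have := inj ⟨p, hp⟩ ⟨b, hbN⟩ (by omega)
          simp only [mkv] at this
          omega
        have hneA : (π ⟨p, hp⟩ : ℕ) ≠ A := by
          intro hc
          have := inj ⟨p, hp⟩ ⟨1, h1N⟩ (by omega)
          simp only [mkv] at this
          omega
        have hIHne : ∀ v : ℕ, 2 ≤ v → v < p →
            (π ⟨p, hp⟩ : ℕ) ≠ (if v < A then v else v + 1) := by
          intro v hv2 hvp hc
          have hvN : v < 2*n := by omega
          have hv := IH v hvp hv2 (by omega) hvN
          have := inj ⟨p, hp⟩ ⟨v, hvN⟩ (by omega)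
          simp only [mkv] at this
          omega
        by_cases hpa : p < A
        · -- show value = p
          have hge : p ≤ (π ⟨p, hp⟩ : ℕ) := by
            by_contra hlt
            push_neg at hlt
            set w := (π ⟨p, hp⟩ : ℕ) with hw
            have hw2 : 2 ≤ w := by omega
            have := hIHne w hw2 (by omega)
            rw [if_pos (by omega)] at this
            omega
          rw [if_pos hpa]
          rcases eq_or_lt_of_le hge with heq | hgt
          · omega
          · exfalso
            set q := π.symm ⟨p, hp⟩ with hq
            have hqv : (π q : ℕ) = p := symmv p hp
            have hqgt : p < (q : ℕ) := by
              rcases Nat.lt_trichotomy (q : ℕ) p with h | h | h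
              · exfalso
                have he : (⟨(q:ℕ), q.2⟩ : Fin (2*n)) = q := rfl
                rcases Nat.lt_or_ge (q:ℕ) 2 with h2 | h2
                · rcases (by omega : (q:ℕ) = 0 ∨ (q:ℕ) = 1) with h3 | h3
                  · have : q = ⟨0, hN⟩ := Fin.ext h3
                    rw [this] at hqv
                    omega
                  · have : q = ⟨1, h1N⟩ := Fin.ext h3
                    rw [this] at hqv
                    omega
                · have := IH (q:ℕ) h h2 (by omega) q.2
                  rw [he] at this
                  rw [if_pos (by omega)] at this
                  omega
              · exfalso
                have : q = ⟨p, hp⟩ := Fin.ext h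
                rw [this] at hqv
                omega
              · exact h
            have hpodd : p % 2 = 1 := by
              have := dumont_mod hd q (by omega)
              omega
            have hp3 : 3 ≤ p := by omega
            have hpm1N : p - 1 < 2*n := by omega
            have hpm1 : (π ⟨p-1, hpm1N⟩ : ℕ) = p - 1 := by
              have := IH (p-1) (by omega) (by omega) (by omega) hpm1N
              rw [if_pos (by omega)] at this
              omega
            refine no132 ⟨p-1, hpm1N⟩ ⟨p, hp⟩ q ?_ ?_ ?_ ?_ ?_ <;>
              (try simp only [mkv]) <;> omega
        · -- A ≤ p : show value = p + 1
          push_neg at hpa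
          have hge : p + 1 ≤ (π ⟨p, hp⟩ : ℕ) := by
            by_contra hlt
            push_neg at hlt
            set w := (π ⟨p, hp⟩ : ℕ) with hw
            have hw2 : 2 ≤ w := by omega
            have hwp : w ≤ p := by omega
            rcases Nat.lt_trichotomy w A with h | h | h
            · have := hIHne w hw2 (by omega)
              rw [if_pos h] at this
              omega
            · omega
            · have := hIHne (w-1) (by omega) (by omega)
              rw [if_neg (by omega)] at this
              omega
          rw [if_neg (by omega)]
          rcases eq_or_lt_of_le hge with heq | hgt
          · omega
          · exfalso
            have hp1N : p + 1 < 2*n := by omega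
            set q := π.symm ⟨p+1, hp1N⟩ with hq
            have hqv : (π q : ℕ) = p + 1 := symmv (p+1) hp1N
            have hqgt : p < (q : ℕ) := by
              rcases Nat.lt_trichotomy (q : ℕ) p with h | h | h
              · exfalso
                have he : (⟨(q:ℕ), q.2⟩ : Fin (2*n)) = q := rfl
                rcases Nat.lt_or_ge (q:ℕ) 2 with h2 | h2
                · rcases (by omega : (q:ℕ) = 0 ∨ (q:ℕ) = 1) with h3 | h3
                  · have : q = ⟨0, hN⟩ := Fin.ext h3
                    rw [this] at hqv
                    omega
                  · have : q = ⟨1, h1N⟩ := Fin.ext h3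
                    rw [this] at hqv
                    omega
                · have := IH (q:ℕ) h h2 (by omega) q.2
                  rw [he] at this
                  split_ifs at this <;> omega
              · exfalso
                have : q = ⟨p, hp⟩ := Fin.ext h
                rw [this] at hqv
                omega
              · exact h
            refine no132 ⟨1, h1N⟩ ⟨p, hp⟩ q ?_ ?_ ?_ ?_ ?_ <;>
              (try simp only [mkv]) <;> omega
    -- C2 : A ≤ b
    have C2 : A ≤ b := by
      by_contra hba
      push_neg at hba
      set q := π.symm ⟨b, hbN⟩ with hq
      have hqv : (π q : ℕ) = b := symmv b hbN
      have hqgt : b < (q : ℕ) := by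
        rcases Nat.lt_trichotomy (q : ℕ) b with h | h | h
        · exfalso
          have he : (⟨(q:ℕ), q.2⟩ : Fin (2*n)) = q := rfl
          rcases Nat.lt_or_ge (q:ℕ) 2 with h2 | h2
          · rcases (by omega : (q:ℕ) = 0 ∨ (q:ℕ) = 1) with h3 | h3
            · have : q = ⟨0, hN⟩ := Fin.ext h3
              rw [this] at hqv
              omega
            · have : q = ⟨1, h1N⟩ := Fin.ext h3
              rw [this] at hqv
              omega
          · have := C1 (q:ℕ) h2 h q.2
            rw [he] at this
            rw [if_pos (by omega)] at this
            omega
        · exfalso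
          have : q = ⟨b, hbN⟩ := Fin.ext h
          rw [this, hmeq] at hqv
          omega
        · exact h
      have hqodd : (q : ℕ) % 2 = 1 := by
        have := dumont_mod hd q (by omega)
        omega
      have hqgt1 : b + 1 < (q : ℕ) := by omega
      have hb1N : b + 1 < 2*n := by omega
      have hw : b < (π ⟨b+1, hb1N⟩ : ℕ) := by
        set w := (π ⟨b+1, hb1N⟩ : ℕ) with hwdef
        have hwne0 : w ≠ 0 := by
          intro hc
          have := inj ⟨b+1, hb1N⟩ ⟨0, hN⟩ (by omega)
          simp only [mkv] at this
          omega
        have hwne1 : w ≠ 1 := by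
          intro hc
          have := inj ⟨b+1, hb1N⟩ ⟨b, hbN⟩ (by omega)
          simp only [mkv] at this
          omega
        have hwneb : w ≠ b := by
          intro hc
          have := inj ⟨b+1, hb1N⟩ q (by omega)
          simp only [mkv] at this
          omega
        by_contra hwb
        push_neg at hwb
        have hw2 : 2 ≤ w := by omega
        have hwb' : w < b := by omega
        have hwN : w < 2*n := by omega
        have hval := C1 w hw2 hwb' hwN
        rw [if_pos (by omega)] at hval
        have := inj ⟨b+1, hb1N⟩ ⟨w, hwN⟩ (by omega)
        simp only [mkv] at this
        omega
      refine no132 ⟨b, hbN⟩ ⟨b+1, hb1N⟩ q ?_ ?_ ?_ ?_ ?_ <;>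
        (try simp only [mkv]) <;> omega
    -- C3 : p > b fixed
    have C3 : ∀ p : ℕ, b < p → ∀ hp : p < 2*n, (π ⟨p, hp⟩ : ℕ) = p := by
      intro p
      induction p using Nat.strong_induction_on with
      | _ p IH =>
        intro hbp hp
        have hge : p ≤ (π ⟨p, hp⟩ : ℕ) := by
          by_contra hlt
          push_neg at hlt
          set w := (π ⟨p, hp⟩ : ℕ) with hwdef
          have hwne0 : w ≠ 0 := by
            intro hc
            have := inj ⟨p, hp⟩ ⟨0, hN⟩ (by omega)
            simp only [mkv] at this
            omega
          have hwne1 : w ≠ 1 := by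
            intro hc
            have := inj ⟨p, hp⟩ ⟨b, hbN⟩ (by omega)
            simp only [mkv] at this
            omega
          have hwneA : w ≠ A := by
            intro hc
            have := inj ⟨p, hp⟩ ⟨1, h1N⟩ (by omega)
            simp only [mkv] at this
            omega
          rcases Nat.lt_or_ge w A with hwA | hwA
          · have h2w : 2 ≤ w := by omega
            have hwN : w < 2*n := by omega
            have hval := C1 w h2w (by omega) hwN
            rw [if_pos hwA] at hval
            have := inj ⟨p, hp⟩ ⟨w, hwN⟩ (by omega)
            simp only [mkv] at this
            omega
          · rcases le_or_gt w b with hwb | hwb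
            · have hwN : w - 1 < 2*n := by omega
              have hval := C1 (w-1) (by omega) (by omega) hwN
              rw [if_neg (by omega)] at hval
              have := inj ⟨p, hp⟩ ⟨w-1, hwN⟩ (by omega)
              simp only [mkv] at this
              omega
            · have hwN : w < 2*n := by omega
              have hval := IH w (by omega) hwb hwN
              have := inj ⟨p, hp⟩ ⟨w, hwN⟩ (by omega)
              simp only [mkv] at this
              omega
        rcases eq_or_lt_of_le hge with heq | hgt
        · omega
        · exfalso
          set q := π.symm ⟨p, hp⟩ with hq
          have hqv : (π q : ℕ) = p := symmv p hp
          have hqgt : p < (q : ℕ) := by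
            rcases Nat.lt_trichotomy (q : ℕ) p with h | h | h
            · exfalso
              have he : (⟨(q:ℕ), q.2⟩ : Fin (2*n)) = q := rfl
              rcases Nat.lt_or_ge (q:ℕ) 2 with h2 | h2
              · rcases (by omega : (q:ℕ) = 0 ∨ (q:ℕ) = 1) with h3 | h3
                · have : q = ⟨0, hN⟩ := Fin.ext h3
                  rw [this] at hqv
                  omega
                · have : q = ⟨1, h1N⟩ := Fin.ext h3
                  rw [this] at hqv
                  omega
              · rcases Nat.lt_trichotomy (q:ℕ) b with h3 | h3 | h3
                · have := C1 (q:ℕ) h2 h3 q.2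
                  rw [he] at this
                  split_ifs at this <;> omega
                · have : q = ⟨b, hbN⟩ := Fin.ext h3
                  rw [this, hmeq] at hqv
                  omega
                · have := IH (q:ℕ) h h3 q.2
                  rw [he] at this
                  omega
            · exfalso
              have : q = ⟨p, hp⟩ := Fin.ext h
              rw [this] at hqv
              omega
            · exact h
          refine no132 ⟨1, h1N⟩ ⟨p, hp⟩ q ?_ ?_ ?_ ?_ ?_ <;>
            (try simp only [mkv]) <;> omega
    refine ⟨A, b, hA2, C2, hbN, hbodd, ?_⟩
    apply Equiv.ext
    intro i
    apply Fin.ext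
    rw [cyc_apply (by omega) hbN C2 (by omega)]
    have hie : (⟨i.1, i.2⟩ : Fin (2*n)) = i := rfl
    show (π i : ℕ) = cfun 1 A b (i : ℕ)
    rcases Nat.lt_trichotomy (i:ℕ) b with hib | hib | hib
    · rcases Nat.lt_or_ge (i:ℕ) 2 with hi2 | hi2
      · rcases (by omega : (i:ℕ) = 0 ∨ (i:ℕ) = 1) with h3 | h3
        · have hval : (π i : ℕ) = 0 := by
            rw [show i = ⟨0, hN⟩ from Fin.ext h3]
            exact h0
          unfold cfun
          split_ifs <;> omega
        · have hval : (π i : ℕ) = A := by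
            rw [show i = ⟨1, h1N⟩ from Fin.ext h3]
          unfold cfun
          split_ifs <;> omega
      · have hval := C1 (i:ℕ) hi2 hib i.2
        rw [hie] at hval
        unfold cfun
        split_ifs at hval ⊢ <;> omega
    · have hval : (π i : ℕ) = 1 := by
        rw [show i = ⟨b, hbN⟩ from Fin.ext hib]
        exact hmeq
      unfold cfun
      split_ifs <;> omega
    · have hval := C3 (i:ℕ) hib i.2
      rw [hie] at hval
      unfold cfun
      split_ifs <;> omega



theorem classify1324 {n : ℕ} (π : Equiv.Perm (Fin (2*n))) (hd : IsDumont4 n π)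
    (hav : Avoids π p1324) :
    π = 1 ∨ ∃ s c : ℕ, s % 2 = 1 ∧ s ≤ c ∧ c + 1 < 2*n ∧ π = cyc (2*n) (2*n-1) s c := by
  have mkv : ∀ (v : ℕ) (h : v < 2*n), ((⟨v, h⟩ : Fin (2*n)) : ℕ) = v := fun _ _ => rfl
  rcases Nat.eq_zero_or_pos n with hn0 | hn
  · left
    apply Equiv.ext
    intro i
    exact absurd i.2 (by omega)
  have hN : 0 < 2*n := by omega
  have h1N : 1 < 2*n := by omega
  have hlN : 2*n - 1 < 2*n := by omega
  have h0 : (π ⟨0, hN⟩ : ℕ) = 0 := perm_zero hd hN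
  have inj : ∀ x y : Fin (2*n), (π x : ℕ) = (π y : ℕ) → (x : ℕ) = (y : ℕ) :=
    fun x y h => congrArg Fin.val (π.injective (Fin.ext h))
  have no213 : ∀ j k l : Fin (2*n), 0 < (j : ℕ) → (j : ℕ) < k → (k : ℕ) < l →
      (π k : ℕ) < (π j : ℕ) → (π j : ℕ) < (π l : ℕ) → False := by
    intro j k l hj hjk hkl hA hB
    exact hav ((contains1324_iff π hN h0).mpr ⟨j, k, l, hj, hjk, hkl, hA, hB⟩)
  have symmv : ∀ (v : ℕ) (hv : v < 2*n), (π (π.symm ⟨v, hv⟩) : ℕ) = v := by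
    intro v hv
    rw [π.apply_symm_apply]
  set S := (π ⟨2*n-1, hlN⟩ : ℕ) with hS
  have hSN : S < 2*n := (π ⟨2*n-1, hlN⟩).2
  by_cases hSl : S = 2*n - 1
  · -- identity case
    left
    have Cfix : ∀ d : ℕ, ∀ p : ℕ, ∀ hp : p < 2*n, 2*n = p + d + 1 → (π ⟨p, hp⟩ : ℕ) = p := by
      intro d
      induction d using Nat.strong_induction_on with
      | _ d IH =>
        intro p hp hpd
        have hup : ∀ q : ℕ, ∀ hq : q < 2*n, p < q → (π ⟨q, hq⟩ : ℕ) = q :=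
          fun q hq hpq => IH (2*n - q - 1) (by omega) q hq (by omega)
        rcases (by omega : p = 2*n - 1 ∨ p < 2*n - 1) with hp1 | hp1
        · have : (⟨p, hp⟩ : Fin (2*n)) = ⟨2*n-1, hlN⟩ := Fin.ext (by (try simp only [mkv]); omega)
          rw [this]
          omega
        · have hle : (π ⟨p, hp⟩ : ℕ) ≤ p := by
            by_contra hgt
            push_neg at hgt
            set w := (π ⟨p, hp⟩ : ℕ) with hw
            have hwN : w < 2*n := (π ⟨p, hp⟩).2
            have hv := hup w hwN hgt
            have := inj ⟨w, hwN⟩ ⟨p, hp⟩ (by omega)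
            simp only [mkv] at this
            omega
          rcases eq_or_lt_of_le hle with heq | hlt
          · exact heq
          · exfalso
            set w := (π ⟨p, hp⟩ : ℕ) with hw
            have hdum := dumont_mod hd ⟨p, hp⟩ (by (try simp only [mkv]); omega)
            simp only [mkv] at hdum
            have hp0 : 0 < p := by omega
            set q := π.symm ⟨p, hp⟩ with hq
            have hqv : (π q : ℕ) = p := symmv p hp
            have hqlt : (q : ℕ) < p := by
              rcases Nat.lt_trichotomy (q : ℕ) p with h | h | h
              · exact h
              · exfalso
                have : q = ⟨p, hp⟩ := Fin.ext h
                rw [this] at hqv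
                omega
              · exfalso
                have he : (⟨(q:ℕ), q.2⟩ : Fin (2*n)) = q := rfl
                have := hup (q:ℕ) q.2 h
                rw [he] at this
                omega
            have hq0 : 0 < (q : ℕ) := by
              rcases Nat.eq_zero_or_pos (q:ℕ) with h | h
              · exfalso
                have : q = ⟨0, hN⟩ := Fin.ext h
                rw [this] at hqv
                omega
              · exact h
            have hp1N : p + 1 < 2*n := by omega
            have hv1 := hup (p+1) hp1N (by omega)
            exact no213 q ⟨p, hp⟩ ⟨p+1, hp1N⟩ hq0 (by (try simp only [mkv]); omega)
              (by (try simp only [mkv]); omega) (by (try simp only [mkv]); omega)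
              (by (try simp only [mkv]); omega)
    apply Equiv.ext
    intro i
    apply Fin.ext
    have := Cfix (2*n - i.1 - 1) i.1 i.2 (by omega)
    rw [Equiv.Perm.one_apply]
    exact this
  · -- non-identity
    right
    have hSd := dumont_mod hd ⟨2*n-1, hlN⟩ (by (try simp only [mkv]); omega)
    simp only [mkv] at hSd
    have hSodd : S % 2 = 1 := hSd.2
    have hS1 : 1 ≤ S := by omega
    set cp := π.symm ⟨2*n-1, hlN⟩ with hcp
    set C := (cp : ℕ) with hC
    have hCN : C < 2*n := cp.2
    have hce : (⟨C, hCN⟩ : Fin (2*n)) = cp := rfl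
    have hCv : (π ⟨C, hCN⟩ : ℕ) = 2*n - 1 := by rw [hce]; exact symmv _ hlN
    have hCne : C ≠ 2*n - 1 := by
      intro hc
      have : (⟨2*n-1, hlN⟩ : Fin (2*n)) = ⟨C, hCN⟩ := Fin.ext (by (try simp only [mkv]); omega)
      rw [this, hCv] at hS
      omega
    have hC0 : C ≠ 0 := by
      intro hc
      have : (⟨0, hN⟩ : Fin (2*n)) = ⟨C, hCN⟩ := Fin.ext (by (try simp only [mkv]); omega)
      rw [this, hCv] at h0
      omega
    -- R1 : increasing before C
    have R1 : ∀ i j : ℕ, 1 ≤ i → i < j → j < C → ∀ hi : i < 2*n, ∀ hj : j < 2*n,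
        (π ⟨i, hi⟩ : ℕ) < (π ⟨j, hj⟩ : ℕ) := by
      intro i j h1 hij hjC hi hj
      have hne : (π ⟨i, hi⟩ : ℕ) ≠ (π ⟨j, hj⟩ : ℕ) := by
        intro hc
        have := inj ⟨i, hi⟩ ⟨j, hj⟩ hc
        simp only [mkv] at this
        omega
      have hilt : (π ⟨i, hi⟩ : ℕ) < 2*n - 1 := by
        have h2 : (π ⟨i, hi⟩ : ℕ) ≠ 2*n - 1 := by
          intro hc
          have := inj ⟨i, hi⟩ ⟨C, hCN⟩ (by omega)
          simp only [mkv] at this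
          omega
        have := (π ⟨i, hi⟩).2
        omega
      by_contra hge
      push_neg at hge
      exact no213 ⟨i, hi⟩ ⟨j, hj⟩ ⟨C, hCN⟩ (by (try simp only [mkv]); omega)
        (by (try simp only [mkv]); omega) (by (try simp only [mkv]); omega)
        (by (try simp only [mkv]); omega) (by (try simp only [mkv]); omega)
    -- R2 : fixed after C
    have R2 : ∀ d : ℕ, ∀ p : ℕ, ∀ hp : p < 2*n, C < p → p < 2*n - 1 → 2*n = p + d + 1 →
        (π ⟨p, hp⟩ : ℕ) = p := by
      intro d
      induction d using Nat.strong_induction_on with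
      | _ d IH =>
        intro p hp hCp hpl hpd
        have hup : ∀ q : ℕ, ∀ hq : q < 2*n, p < q → q < 2*n - 1 → (π ⟨q, hq⟩ : ℕ) = q :=
          fun q hq hpq hql => IH (2*n - q - 1) (by omega) q hq (by omega) hql (by omega)
        have hle : (π ⟨p, hp⟩ : ℕ) ≤ p := by
          by_contra hgt
          push_neg at hgt
          set w := (π ⟨p, hp⟩ : ℕ) with hw
          have hwN : w < 2*n := (π ⟨p, hp⟩).2
          rcases (by omega : w = 2*n - 1 ∨ w < 2*n - 1) with h | h
          · have := inj ⟨p, hp⟩ ⟨C, hCN⟩ (by omega)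
            simp only [mkv] at this
            omega
          · have hv := hup w hwN hgt h
            have := inj ⟨w, hwN⟩ ⟨p, hp⟩ (by omega)
            simp only [mkv] at this
            omega
        rcases eq_or_lt_of_le hle with heq | hlt
        · exact heq
        · exfalso
          set w := (π ⟨p, hp⟩ : ℕ) with hw
          have hdum := dumont_mod hd ⟨p, hp⟩ (by (try simp only [mkv]); omega)
          simp only [mkv] at hdum
          set q := π.symm ⟨p, hp⟩ with hq
          have hqv : (π q : ℕ) = p := symmv p hp
          have he : (⟨(q:ℕ), q.2⟩ : Fin (2*n)) = q := rfl
          have hqne : (q : ℕ) ≠ p := by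
            intro hc
            have : q = ⟨p, hp⟩ := Fin.ext hc
            rw [this] at hqv
            omega
          have hqni : ¬ (p < (q:ℕ) ∧ (q:ℕ) < 2*n - 1) := by
            rintro ⟨h1, h2⟩
            have := hup (q:ℕ) q.2 h1 h2
            rw [he] at this
            omega
          rcases (by omega : (q:ℕ) = 2*n - 1 ∨ (q:ℕ) < p) with hql | hql
          · -- S = p
            have hSp : S = p := by
              have : (⟨2*n-1, hlN⟩ : Fin (2*n)) = q := Fin.ext (by (try simp only [mkv]); omega)
              rw [← this] at hqv
              omega
            have hw2 : w + 2 ≤ p := by omega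
            have hpm1N : p - 1 < 2*n := by omega
            set r := π.symm ⟨p-1, hpm1N⟩ with hr
            have hrv : (π r : ℕ) = p - 1 := symmv (p-1) hpm1N
            have hre : (⟨(r:ℕ), r.2⟩ : Fin (2*n)) = r := rfl
            have hrlt : (r : ℕ) < p := by
              rcases Nat.lt_trichotomy (r : ℕ) p with h | h | h
              · exact h
              · exfalso
                have : r = ⟨p, hp⟩ := Fin.ext h
                rw [this] at hrv
                omega
              · exfalso
                rcases (by omega : (r:ℕ) = 2*n - 1 ∨ (r:ℕ) < 2*n - 1) with h2 | h2
                · have : r = ⟨2*n-1, hlN⟩ := Fin.ext h2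
                  rw [this] at hrv
                  omega
                · have := hup (r:ℕ) r.2 h h2
                  rw [hre] at this
                  omega
            have hr0 : 0 < (r : ℕ) := by
              rcases Nat.eq_zero_or_pos (r:ℕ) with h | h
              · exfalso
                have : r = ⟨0, hN⟩ := Fin.ext h
                rw [this] at hrv
                omega
              · exact h
            exact no213 r ⟨p, hp⟩ ⟨2*n-1, hlN⟩ hr0 (by (try simp only [mkv]); omega)
              (by (try simp only [mkv]); omega) (by (try simp only [mkv]); omega)
              (by (try simp only [mkv]); omega)
          · have hq0 : 0 < (q : ℕ) := by
              rcases Nat.eq_zero_or_pos (q:ℕ) with h | h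
              · exfalso
                have : q = ⟨0, hN⟩ := Fin.ext h
                rw [this] at hqv
                omega
              · exact h
            have hp1N : p + 1 < 2*n := by omega
            have hp1l : p + 1 < 2*n - 1 := by omega
            have hv1 := hup (p+1) hp1N (by omega) hp1l
            exact no213 q ⟨p, hp⟩ ⟨p+1, hp1N⟩ hq0 (by (try simp only [mkv]); omega)
              (by (try simp only [mkv]); omega) (by (try simp only [mkv]); omega)
              (by (try simp only [mkv]); omega)
    -- S ≤ C
    have hSC : S ≤ C := by
      by_contra hCS
      push_neg at hCS
      have hSl' : S < 2*n - 1 := by omega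
      have := R2 (2*n - S - 1) S (by omega) hCS hSl' (by omega)
      have h2 := inj ⟨S, by omega⟩ ⟨2*n-1, hlN⟩ (by omega)
      simp only [mkv] at h2
      omega
    -- R4a : fixed before S
    have R4a : ∀ p : ℕ, 1 ≤ p → p < S → ∀ hp : p < 2*n, (π ⟨p, hp⟩ : ℕ) = p := by
      intro p
      induction p using Nat.strong_induction_on with
      | _ p IH =>
        intro hp1 hpS hp
        have hge : p ≤ (π ⟨p, hp⟩ : ℕ) := by
          by_contra hlt
          push_neg at hlt
          set w := (π ⟨p, hp⟩ : ℕ) with hw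
          rcases Nat.eq_zero_or_pos w with h | h
          · have := inj ⟨p, hp⟩ ⟨0, hN⟩ (by omega)
            simp only [mkv] at this
            omega
          · have hwN : w < 2*n := by omega
            have hv := IH w hlt h (by omega) hwN
            have := inj ⟨p, hp⟩ ⟨w, hwN⟩ (by omega)
            simp only [mkv] at this
            omega
        rcases eq_or_lt_of_le hge with heq | hgt
        · omega
        · exfalso
          set q := π.symm ⟨p, hp⟩ with hq
          have hqv : (π q : ℕ) = p := symmv p hp
          have he : (⟨(q:ℕ), q.2⟩ : Fin (2*n)) = q := rfl
          have hq0 : (q:ℕ) ≠ 0 := by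
            intro hc
            have : q = ⟨0, hN⟩ := Fin.ext hc
            rw [this] at hqv
            omega
          have hqlow : ¬ ((q:ℕ) ≥ 1 ∧ (q:ℕ) < p) := by
            rintro ⟨h1, h2⟩
            have := IH (q:ℕ) h2 h1 (by omega) q.2
            rw [he] at this
            omega
          have hqp : (q:ℕ) ≠ p := by
            intro hc
            have : q = ⟨p, hp⟩ := Fin.ext hc
            rw [this] at hqv
            omega
          have hqC : (q:ℕ) ≠ C := by
            intro hc
            have : q = ⟨C, hCN⟩ := Fin.ext hc
            rw [this, hCv] at hqv
            omega
          have hqmid : ¬ (p < (q:ℕ) ∧ (q:ℕ) < C) := by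
            rintro ⟨h1, h2⟩
            have := R1 p (q:ℕ) hp1 h1 h2 hp q.2
            rw [he] at this
            omega
          have hqhigh : ¬ (C < (q:ℕ) ∧ (q:ℕ) < 2*n - 1) := by
            rintro ⟨h1, h2⟩
            have := R2 (2*n - (q:ℕ) - 1) (q:ℕ) q.2 h1 h2 (by omega)
            rw [he] at this
            omega
          have hqlast : (q:ℕ) ≠ 2*n - 1 := by
            intro hc
            have : q = ⟨2*n-1, hlN⟩ := Fin.ext hc
            rw [this] at hqv
            omega
          have := q.2
          omega
    -- R4b : shift in [S, C)
    have R4b : ∀ p : ℕ, S ≤ p → p < C → ∀ hp : p < 2*n, (π ⟨p, hp⟩ : ℕ) = p + 1 := by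
      intro p
      induction p using Nat.strong_induction_on with
      | _ p IH =>
        intro hSp hpC hp
        have hge : p + 1 ≤ (π ⟨p, hp⟩ : ℕ) := by
          by_contra hlt
          push_neg at hlt
          set w := (π ⟨p, hp⟩ : ℕ) with hw
          have hw0 : w ≠ 0 := by
            intro hc
            have := inj ⟨p, hp⟩ ⟨0, hN⟩ (by omega)
            simp only [mkv] at this
            omega
          have hwS : w ≠ S := by
            intro hc
            have := inj ⟨p, hp⟩ ⟨2*n-1, hlN⟩ (by omega)
            simp only [mkv] at this
            omega
          rcases (by omega : (1 ≤ w ∧ w < S) ∨ (S < w ∧ w ≤ p)) with ⟨h1, h2⟩ | ⟨h1, h2⟩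
          · have hv := R4a w h1 h2 (by omega)
            have := inj ⟨p, hp⟩ ⟨w, by omega⟩ (by omega)
            simp only [mkv] at this
            omega
          · have hv := IH (w-1) (by omega) (by omega) (by omega) (by omega)
            have := inj ⟨p, hp⟩ ⟨w-1, by omega⟩ (by omega)
            simp only [mkv] at this
            omega
        rcases eq_or_lt_of_le hge with heq | hgt
        · omega
        · exfalso
          have hp1N : p + 1 < 2*n := by omega
          set q := π.symm ⟨p+1, hp1N⟩ with hq
          have hqv : (π q : ℕ) = p + 1 := symmv (p+1) hp1N
          have he : (⟨(q:ℕ), q.2⟩ : Fin (2*n)) = q := rfl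
          have hq0 : (q:ℕ) ≠ 0 := by
            intro hc
            have : q = ⟨0, hN⟩ := Fin.ext hc
            rw [this] at hqv
            omega
          have hqlow : ¬ ((q:ℕ) ≥ 1 ∧ (q:ℕ) < S) := by
            rintro ⟨h1, h2⟩
            have := R4a (q:ℕ) h1 h2 q.2
            rw [he] at this
            omega
          have hqmid1 : ¬ (S ≤ (q:ℕ) ∧ (q:ℕ) < p) := by
            rintro ⟨h1, h2⟩
            have := IH (q:ℕ) h2 h1 (by omega) q.2
            rw [he] at this
            omega
          have hqp : (q:ℕ) ≠ p := by
            intro hc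
            have : q = ⟨p, hp⟩ := Fin.ext hc
            rw [this] at hqv
            omega
          have hqmid : ¬ (p < (q:ℕ) ∧ (q:ℕ) < C) := by
            rintro ⟨h1, h2⟩
            have := R1 p (q:ℕ) (by omega) h1 h2 hp q.2
            rw [he] at this
            omega
          have hqC : (q:ℕ) ≠ C := by
            intro hc
            have : q = ⟨C, hCN⟩ := Fin.ext hc
            rw [this, hCv] at hqv
            omega
          have hqhigh : ¬ (C < (q:ℕ) ∧ (q:ℕ) < 2*n - 1) := by
            rintro ⟨h1, h2⟩
            have := R2 (2*n - (q:ℕ) - 1) (q:ℕ) q.2 h1 h2 (by omega)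
            rw [he] at this
            omega
          have hqlast : (q:ℕ) ≠ 2*n - 1 := by
            intro hc
            have : q = ⟨2*n-1, hlN⟩ := Fin.ext hc
            rw [this] at hqv
            omega
          have := q.2
          omega
    refine ⟨S, C, hSodd, hSC, by omega, ?_⟩
    apply Equiv.ext
    intro i
    apply Fin.ext
    rw [cyc_apply (by omega) (by omega) hSC (by omega)]
    have hie : (⟨i.1, i.2⟩ : Fin (2*n)) = i := rfl
    show (π i : ℕ) = cfun (2*n-1) S C (i : ℕ)
    rcases (by omega : (i:ℕ) = 0 ∨ (1 ≤ (i:ℕ) ∧ (i:ℕ) < S) ∨ (S ≤ (i:ℕ) ∧ (i:ℕ) < C) ∨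
        (i:ℕ) = C ∨ (C < (i:ℕ) ∧ (i:ℕ) < 2*n - 1) ∨ (i:ℕ) = 2*n - 1) with
      h | ⟨h1, h2⟩ | ⟨h1, h2⟩ | h | ⟨h1, h2⟩ | h
    · have hval : (π i : ℕ) = 0 := by
        rw [show i = ⟨0, hN⟩ from Fin.ext h]
        exact h0
      unfold cfun
      split_ifs <;> omega
    · have hval := R4a (i:ℕ) h1 h2 i.2
      rw [hie] at hval
      unfold cfun
      split_ifs <;> omega
    · have hval := R4b (i:ℕ) h1 h2 i.2
      rw [hie] at hval
      unfold cfun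
      split_ifs <;> omega
    · have hval : (π i : ℕ) = 2*n - 1 := by
        rw [show i = ⟨C, hCN⟩ from Fin.ext h]
        exact hCv
      unfold cfun
      split_ifs <;> omega
    · have hval := R2 (2*n - (i:ℕ) - 1) (i:ℕ) i.2 h1 h2 (by omega)
      rw [hie] at hval
      unfold cfun
      split_ifs <;> omega
    · have hval : (π i : ℕ) = S := by
        rw [show i = ⟨2*n-1, hlN⟩ from Fin.ext h]
      unfold cfun
      split_ifs <;> omega

-- counting lemmas, standalone (pure Finset arithmetic)
def I1 (n : ℕ) : Finset (ℕ × ℕ) :=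
  (Finset.range (2*n) ×ˢ Finset.range (2*n)).filter (fun q => 2 ≤ q.1 ∧ q.1 ≤ q.2 ∧ q.2 % 2 = 1)

def I2 (n : ℕ) : Finset (ℕ × ℕ) :=
  (Finset.range (2*n) ×ˢ Finset.range (2*n - 1)).filter (fun q => q.1 % 2 = 1 ∧ q.1 ≤ q.2)

def Odds (m : ℕ) : Finset ℕ := (Finset.range m).filter (fun s => s % 2 = 1)

lemma card_odds (n : ℕ) : (Odds (2*n)).card = n := by
  induction n with
  | zero => rfl
  | succ n IH =>
    have : Odds (2*(n+1)) = insert (2*n+1) (Odds (2*n)) := by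
      ext s
      simp only [Odds, Finset.mem_filter, Finset.mem_range, Finset.mem_insert]
      omega
    rw [this, Finset.card_insert_of_notMem (by simp [Odds])]
    omega

lemma card_I1 (n : ℕ) : (I1 n).card = n^2 - n := by
  induction n with
  | zero => rfl
  | succ n IH =>
    have hsq : (n+1)^2 = n^2 + 2*n + 1 := by ring
    have hle : n ≤ n^2 := Nat.le_self_pow (by norm_num) n
    have hnew : I1 (n+1) = I1 n ∪ (Finset.Ico 2 (2*n+2)).image (fun a => (a, 2*n+1)) := by
      ext q
      obtain ⟨a, b⟩ := q
      simp only [I1, Finset.mem_filter, Finset.mem_product, Finset.mem_range,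
        Finset.mem_union, Finset.mem_image, Finset.mem_Ico, Prod.mk.injEq]
      constructor
      · rintro ⟨⟨ha, hb⟩, h2, hab, hodd⟩
        by_cases hb' : b = 2*n+1
        · right
          exact ⟨a, ⟨by omega, by omega⟩, rfl, hb'.symm⟩
        · left
          omega
      · rintro (⟨⟨ha, hb⟩, h2, hab, hodd⟩ | ⟨x, ⟨hx1, hx2⟩, rfl, rfl⟩)
        · exact ⟨⟨by omega, by omega⟩, by omega, by omega, by omega⟩
        · exact ⟨⟨by omega, by omega⟩, by omega, by omega, by omega⟩
    rw [hnew, Finset.card_union_of_disjoint, Finset.card_image_of_injective _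
      (fun x y h => (Prod.mk.injEq _ _ _ _ ▸ h).1)]
    · rw [Nat.card_Ico, IH]
      omega
    · rw [Finset.disjoint_right]
      intro q hq hq'
      simp only [Finset.mem_image, Finset.mem_Ico] at hq
      obtain ⟨x, _, rfl⟩ := hq
      simp only [I1, Finset.mem_filter, Finset.mem_product, Finset.mem_range] at hq'
      omega

lemma card_I2 (n : ℕ) : (I2 n).card = n^2 - n := by
  induction n with
  | zero => rfl
  | succ n IH =>
    rcases Nat.eq_zero_or_pos n with hn0 | hn
    · subst hn0
      have : I2 1 = ∅ := by
        ext q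
        obtain ⟨a, b⟩ := q
        simp only [I2, Finset.mem_filter, Finset.mem_product, Finset.mem_range,
          Finset.notMem_empty, iff_false, not_and]
        omega
      rw [this]
      rfl
    have hsq : (n+1)^2 = n^2 + 2*n + 1 := by ring
    have hle : n ≤ n^2 := Nat.le_self_pow (by norm_num) n
    have hnew : I2 (n+1) = (I2 n ∪ (Odds (2*n)).image (fun s => (s, 2*n-1))) ∪
        (Odds (2*n)).image (fun s => (s, 2*n)) := by
      ext q
      obtain ⟨s, c⟩ := q
      simp only [I2, Odds, Finset.mem_filter, Finset.mem_product, Finset.mem_range,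
        Finset.mem_union, Finset.mem_image, Prod.mk.injEq]
      constructor
      · rintro ⟨⟨hs, hc⟩, hodd, hsc⟩
        rcases (by omega : c < 2*n - 1 ∨ c = 2*n-1 ∨ c = 2*n) with h | h | h
        · exact Or.inl (Or.inl ⟨⟨by omega, by omega⟩, hodd, hsc⟩)
        · exact Or.inl (Or.inr ⟨s, ⟨by omega, hodd⟩, rfl, h.symm⟩)
        · exact Or.inr ⟨s, ⟨by omega, hodd⟩, rfl, h.symm⟩
      · rintro ((⟨⟨hs, hc⟩, hodd, hsc⟩ | ⟨x, ⟨hx1, hx2⟩, rfl, rfl⟩) | ⟨x, ⟨hx1, hx2⟩, rfl, rfl⟩)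
        · exact ⟨⟨by omega, by omega⟩, hodd, hsc⟩
        · exact ⟨⟨by omega, by omega⟩, hx2, by omega⟩
        · exact ⟨⟨by omega, by omega⟩, hx2, by omega⟩
    have hinj : ∀ m : ℕ, Function.Injective (fun s : ℕ => (s, m)) :=
      fun m x y h => (Prod.mk.injEq _ _ _ _ ▸ h).1
    rw [hnew, Finset.card_union_of_disjoint, Finset.card_union_of_disjoint,
      Finset.card_image_of_injective _ (hinj _), Finset.card_image_of_injective _ (hinj _),
      card_odds, IH]
    · omega
    · rw [Finset.disjoint_right]
      intro q hq hq'
      simp only [Finset.mem_image, Odds, Finset.mem_filter, Finset.mem_range] at hq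
      obtain ⟨x, _, rfl⟩ := hq
      simp only [I2, Finset.mem_filter, Finset.mem_product, Finset.mem_range] at hq'
      omega
    · rw [Finset.disjoint_right]
      intro q hq hq'
      simp only [Finset.mem_image, Odds, Finset.mem_filter, Finset.mem_range] at hq
      obtain ⟨x, _, rfl⟩ := hq
      simp only [I2, Odds, Finset.mem_union, Finset.mem_image, Finset.mem_filter,
        Finset.mem_product, Finset.mem_range, Prod.mk.injEq] at hq'
      rcases hq' with ⟨⟨h1, hc⟩, h2, h3⟩ | ⟨y, hy, hyx, hc⟩ <;> omega



lemma mem_I1 {n a b : ℕ} : (a, b) ∈ I1 n ↔ (2 ≤ a ∧ a ≤ b ∧ b % 2 = 1 ∧ b < 2*n) := by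
  simp only [I1, Finset.mem_filter, Finset.mem_product, Finset.mem_range]
  omega

lemma mem_I2 {n s c : ℕ} : (s, c) ∈ I2 n ↔ (s % 2 = 1 ∧ s ≤ c ∧ c + 1 < 2*n) := by
  simp only [I2, Finset.mem_filter, Finset.mem_product, Finset.mem_range]
  omega

lemma cyc1_ne_one {n a b : ℕ} (ha : 2 ≤ a) (hab : a ≤ b) (hb : b < 2*n) :
    cyc (2*n) 1 a b ≠ 1 := by
  intro hc
  have h1N : 1 < 2*n := by omega
  have := cyc_apply (N := 2*n) (t := 1) (a := a) (b := b) (by omega) hb hab (by omega) ⟨1, h1N⟩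
  rw [hc] at this
  have h2 : (((1 : Equiv.Perm (Fin (2*n))) ⟨1, h1N⟩ : Fin (2*n)) : ℕ) = 1 := rfl
  rw [h2] at this
  unfold cfun at this
  have he : ((⟨1, h1N⟩ : Fin (2*n)) : ℕ) = 1 := rfl
  rw [he] at this
  split_ifs at this <;> omega

lemma cyc2_ne_one {n s c : ℕ} (hs : s % 2 = 1) (hsc : s ≤ c) (hc : c + 1 < 2*n) :
    cyc (2*n) (2*n-1) s c ≠ 1 := by
  intro hcon
  have hlN : 2*n - 1 < 2*n := by omega
  have := cyc_apply (N := 2*n) (t := 2*n-1) (a := s) (b := c) (by omega) (by omega) hsc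
    (by omega) ⟨2*n-1, hlN⟩
  rw [hcon] at this
  have h2 : (((1 : Equiv.Perm (Fin (2*n))) ⟨2*n-1, hlN⟩ : Fin (2*n)) : ℕ) = 2*n-1 := rfl
  rw [h2] at this
  have he : ((⟨2*n-1, hlN⟩ : Fin (2*n)) : ℕ) = 2*n-1 := rfl
  rw [he] at this
  unfold cfun at this
  split_ifs at this <;> omega

lemma inj_cyc1 {n : ℕ} : Set.InjOn (fun q : ℕ × ℕ => cyc (2*n) 1 q.1 q.2) (I1 n) := by
  rintro ⟨a, b⟩ ha ⟨a', b'⟩ ha' heq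
  rw [Finset.mem_coe, mem_I1] at ha ha'
  obtain ⟨h1, h2, h3, h4⟩ := ha
  obtain ⟨h1', h2', h3', h4'⟩ := ha'
  have h1N : 1 < 2*n := by omega
  have hbN : b < 2*n := h4
  simp only at heq
  have e1 := congrArg (fun σ : Equiv.Perm (Fin (2*n)) => ((σ ⟨1, h1N⟩ : Fin (2*n)) : ℕ)) heq
  have e2 := congrArg (fun σ : Equiv.Perm (Fin (2*n)) => ((σ ⟨b, hbN⟩ : Fin (2*n)) : ℕ)) heq
  rw [cyc_apply (by omega) h4 h2 (by omega), cyc_apply (by omega) h4' h2' (by omega)] at e1 e2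
  have he1 : ((⟨1, h1N⟩ : Fin (2*n)) : ℕ) = 1 := rfl
  have he2 : ((⟨b, hbN⟩ : Fin (2*n)) : ℕ) = b := rfl
  rw [he1] at e1
  rw [he2] at e2
  unfold cfun at e1 e2
  split_ifs at e1 e2 <;>
    first
      | omega
      | (apply Prod.ext <;> simp <;> omega)

lemma inj_cyc2 {n : ℕ} : Set.InjOn (fun q : ℕ × ℕ => cyc (2*n) (2*n-1) q.1 q.2) (I2 n) := by
  rintro ⟨s, c⟩ ha ⟨s', c'⟩ ha' heq
  rw [Finset.mem_coe, mem_I2] at ha ha'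
  obtain ⟨h1, h2, h3⟩ := ha
  obtain ⟨h1', h2', h3'⟩ := ha'
  have hlN : 2*n - 1 < 2*n := by omega
  have hcN : c < 2*n := by omega
  simp only at heq
  have e1 := congrArg (fun σ : Equiv.Perm (Fin (2*n)) => ((σ ⟨2*n-1, hlN⟩ : Fin (2*n)) : ℕ)) heq
  have e2 := congrArg (fun σ : Equiv.Perm (Fin (2*n)) => ((σ ⟨c, hcN⟩ : Fin (2*n)) : ℕ)) heq
  rw [cyc_apply (by omega) (by omega) h2 (by omega),
    cyc_apply (by omega) (by omega) h2' (by omega)] at e1 e2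
  have he1 : ((⟨2*n-1, hlN⟩ : Fin (2*n)) : ℕ) = 2*n-1 := rfl
  have he2 : ((⟨c, hcN⟩ : Fin (2*n)) : ℕ) = c := rfl
  rw [he1] at e1
  rw [he2] at e2
  unfold cfun at e1 e2
  split_ifs at e1 e2 <;>
    first
      | omega
      | (apply Prod.ext <;> simp <;> omega)

noncomputable def F1f (n : ℕ) : Finset (Equiv.Perm (Fin (2*n))) :=
  insert 1 ((I1 n).image (fun q => cyc (2*n) 1 q.1 q.2))

noncomputable def F2f (n : ℕ) : Finset (Equiv.Perm (Fin (2*n))) :=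
  insert 1 ((I2 n).image (fun q => cyc (2*n) (2*n-1) q.1 q.2))

lemma card_F1f (n : ℕ) : (F1f n).card = n^2 - n + 1 := by
  rw [F1f, Finset.card_insert_of_notMem, Finset.card_image_of_injOn inj_cyc1, card_I1]
  intro hmem
  obtain ⟨⟨a, b⟩, hab, heq⟩ := Finset.mem_image.mp hmem
  rw [mem_I1] at hab
  exact cyc1_ne_one hab.1 hab.2.1 hab.2.2.2 heq

lemma card_F2f (n : ℕ) : (F2f n).card = n^2 - n + 1 := by
  rw [F2f, Finset.card_insert_of_notMem, Finset.card_image_of_injOn inj_cyc2, card_I2]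
  intro hmem
  obtain ⟨⟨s, c⟩, hsc, heq⟩ := Finset.mem_image.mp hmem
  rw [mem_I2] at hsc
  exact cyc2_ne_one hsc.1 hsc.2.1 hsc.2.2 heq

lemma mem_F1f (n : ℕ) (π : Equiv.Perm (Fin (2*n))) :
    (IsDumont4 n π ∧ Avoids π p1243) ↔ π ∈ F1f n := by
  constructor
  · rintro ⟨hd, hav⟩
    rcases classify1243 π hd hav with h | ⟨a, b, h1, h2, h3, h4, h5⟩
    · rw [h]
      exact Finset.mem_insert_self _ _
    · refine Finset.mem_insert_of_mem (Finset.mem_image.mpr ⟨(a, b), mem_I1.mpr ⟨h1, h2, h4, h3⟩, h5.symm⟩)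
  · intro hmem
    rcases Finset.mem_insert.mp hmem with h | h
    · subst h
      exact ⟨one_dumont n, one_avoids1243 n⟩
    · obtain ⟨⟨a, b⟩, hab, heq⟩ := Finset.mem_image.mp h
      rw [mem_I1] at hab
      subst heq
      exact ⟨cyc1_dumont hab.1 hab.2.1 hab.2.2.2 hab.2.2.1,
        cyc1_avoids hab.1 hab.2.1 hab.2.2.2⟩

lemma mem_F2f (n : ℕ) (π : Equiv.Perm (Fin (2*n))) :
    (IsDumont4 n π ∧ Avoids π p1324) ↔ π ∈ F2f n := by
  constructor
  · rintro ⟨hd, hav⟩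
    rcases classify1324 π hd hav with h | ⟨s, c, h1, h2, h3, h4⟩
    · rw [h]
      exact Finset.mem_insert_self _ _
    · exact Finset.mem_insert_of_mem (Finset.mem_image.mpr ⟨(s, c), mem_I2.mpr ⟨h1, h2, h3⟩, h4.symm⟩)
  · intro hmem
    rcases Finset.mem_insert.mp hmem with h | h
    · subst h
      exact ⟨one_dumont n, one_avoids1324 n⟩
    · obtain ⟨⟨s, c⟩, hsc, heq⟩ := Finset.mem_image.mp h
      rw [mem_I2] at hsc
      subst heq
      exact ⟨cyc2_dumont hsc.1 hsc.2.1 hsc.2.2, cyc2_avoids hsc.1 hsc.2.1 hsc.2.2⟩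

lemma count1243 (n : ℕ) :
    Nat.card {π : Equiv.Perm (Fin (2 * n)) // IsDumont4 n π ∧ Avoids π p1243} = n ^ 2 - n + 1 := by
  rw [Nat.card_congr (Equiv.subtypeEquivRight (mem_F1f n))]
  rw [Nat.card_eq_finsetCard]
  exact card_F1f n

lemma count1324 (n : ℕ) :
    Nat.card {π : Equiv.Perm (Fin (2 * n)) // IsDumont4 n π ∧ Avoids π p1324} = n ^ 2 - n + 1 := by
  rw [Nat.card_congr (Equiv.subtypeEquivRight (mem_F2f n))]
  rw [Nat.card_eq_finsetCard]
  exact card_F2f n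

/-- The number of Dumont-4 permutations of length 2n avoiding 1243 is n² - n + 1,
hence equals the number of those avoiding 1324. -/
theorem stmt_10 (n : ℕ) :
    Nat.card {π : Equiv.Perm (Fin (2 * n)) // IsDumont4 n π ∧ Avoids π p1243} = n ^ 2 - n + 1 ∧
    Nat.card {π : Equiv.Perm (Fin (2 * n)) // IsDumont4 n π ∧ Avoids π p1243} =
      Nat.card {π : Equiv.Perm (Fin (2 * n)) // IsDumont4 n π ∧ Avoids π p1324} := by
  refine ⟨count1243 n, ?_⟩
  rw [count1243 n, count1324 n]
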